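/- arXiv:1704.04262 — 2 statements merged into one kernel-verified Lean document; each statement's English description precedes it below -/
import Mathlib

section
/- Let G be a bull-free, C5-free graph, let C be a shortest odd hole in G, and let v be a vertex of G not on C whose neighborhood on C is not contained in any two-edge subpath of C. Then there exist four consecutive vertices of C all adjacent to v. -/
open SimpleGraph

/-- The bull: a triangle 0,1,2 with pendant edges 0–3 and 1–4. -/
def bull : SimpleGraph (Fin 5) :=
  SimpleGraph.fromRel (fun a b =>
    (a, b) ∈ [((0 : Fin 5), (1 : Fin 5)), (0, 2), (1, 2), (0, 3), (1, 4)])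

/-- `G` has an induced copy of `H`. -/
def Contains {V W : Type*} (G : SimpleGraph V) (H : SimpleGraph W) : Prop :=
  Nonempty (H ↪g G)

/-- `G` has an odd hole: an induced cycle of odd length at least 5. -/
def HasOddHole {V : Type*} (G : SimpleGraph V) : Prop :=
  ∃ n, 5 ≤ n ∧ Odd n ∧ Nonempty (SimpleGraph.cycleGraph n ↪g G)

/-- `e` exhibits a shortest odd hole in `G`. -/
def IsShortestOddHole {V : Type*} (G : SimpleGraph V) {k : ℕ}
    (_e : SimpleGraph.cycleGraph k ↪g G) : Prop :=
  5 ≤ k ∧ Odd k ∧ ∀ m, 5 ≤ m → Odd m → Nonempty (SimpleGraph.cycleGraph m ↪g G) → k ≤ m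

/-- The hole given by `e` is clean: the neighbours on the hole of any vertex off the hole
are contained in a two-edge path `i-1, i, i+1` of the hole. -/
def CleanHole {V : Type*} (G : SimpleGraph V) {k : ℕ}
    (e : SimpleGraph.cycleGraph k ↪g G) : Prop :=
  ∀ v : V, (∀ j, e j ≠ v) →
    ∃ i : Fin k, ∀ j, G.Adj v (e j) → j = i ∨ (SimpleGraph.cycleGraph k).Adj i j

/-- `G` is pure: it has no odd hole, or some shortest odd hole of `G` is clean. -/
def IsPure {V : Type*} (G : SimpleGraph V) : Prop :=
  ¬ HasOddHole G ∨
    ∃ (k : ℕ) (e : SimpleGraph.cycleGraph k ↪g G), IsShortestOddHole G e ∧ CleanHole G e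

/-- `p`, `c`, `a` form an anchor in `G`: `p` is an induced 4-vertex path, `c` is complete
to it, and `a` is anticomplete to it. -/
def IsAnchorIn {V : Type*} (G : SimpleGraph V) (p : Fin 4 → V) (c a : V) : Prop :=
  Function.Injective p ∧ (∀ i, c ≠ p i) ∧ (∀ i, a ≠ p i) ∧ a ≠ c ∧
  (∀ i j : Fin 4, G.Adj (p i) (p j) ↔ ((i : ℕ) + 1 = j ∨ (j : ℕ) + 1 = i)) ∧
  (∀ i, G.Adj c (p i)) ∧ (∀ i, ¬ G.Adj a (p i))

/-- `G` contains an anchor. -/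
def ContainsAnchor {V : Type*} (G : SimpleGraph V) : Prop :=
  ∃ p c a, IsAnchorIn G p c a

/-- `X` is a homogeneous set of `G`. -/
def IsHomogeneousSet {V : Type*} [Fintype V] (G : SimpleGraph V) (X : Finset V) : Prop :=
  1 < X.card ∧ X.card < Fintype.card V ∧
    ∀ v ∉ X, (∀ x ∈ X, G.Adj v x) ∨ (∀ x ∈ X, ¬ G.Adj v x)

/-!
Let `C` have odd length `k`; it is at least 7 because `G` is `C5`-free. Walking around `C` from a
neighbour of `v`, the gaps between consecutive neighbours of `v` add up to the odd number `k`, so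
one of them, of length `g`, is odd. If `3 ≤ g ≤ k - 4`, the arc of that gap closes up through `v`
into an odd hole of length `g + 2 < k`; if `g ≥ k - 2`, all neighbours of `v` lie on a two-edge
path of `C`. Hence `g = 1`: `v` has two adjacent neighbours on `C`. A bull then forces a third
consecutive neighbour, and, since the neighbours of `v` do not all lie on three consecutive
vertices, a second bull forces a fourth.
-/

theorem Nat.exists_odd_gap {P : ℕ → Prop} {n : ℕ} (h0 : P 0) (hn : P n) (hodd : Odd n) :
    ∃ c g, Odd g ∧ c + g ≤ n ∧ P c ∧ P (c + g) ∧ ∀ s, c < s → s < c + g → ¬ P s := by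
  classical
  induction n using Nat.strong_induction_on with
  | _ n ih =>
    set c := Nat.findGreatest P (n - 1)
    have hc : P c := Nat.findGreatest_spec (zero_le _) h0
    have hcn : c < n := by
      have := Nat.findGreatest_le (P := P) (n - 1)
      have := hodd.pos
      omega
    by_cases hgap : Odd (n - c)
    · refine ⟨c, n - c, hgap, by omega, hc, by rwa [Nat.add_sub_cancel' hcn.le],
        fun s hcs hsn => Nat.findGreatest_is_greatest hcs (by omega)⟩
    · rw [Nat.not_odd_iff_even, Nat.even_iff] at hgap
      rw [Nat.odd_iff] at hodd
      obtain ⟨c', g, hg, hle, hP⟩ := ih c hcn hc (by rw [Nat.odd_iff]; omega)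
      exact ⟨c', g, hg, by omega, hP⟩

namespace Fin

open Fin.NatCast

variable {k : ℕ} [NeZero k]

theorem add_natCast_inj (x : Fin k) {c d : ℕ} (hc : c < k) (hd : d < k) :
    x + (c : Fin k) = x + d ↔ c = d := by
  rw [add_right_inj, Fin.ext_iff, Fin.val_cast_of_lt hc, Fin.val_cast_of_lt hd]

theorem exists_lt_eq_add_natCast (x j : Fin k) : ∃ s < k, j = x + s :=
  ⟨(j - x).val, (j - x).isLt, by rw [Fin.cast_val_eq_self, add_sub_cancel]⟩

theorem add_natCast_sub_self {n : ℕ} (h : k ≤ n) (x : Fin k) :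
    x + ((n - k : ℕ) : Fin k) = x + n := by
  conv_rhs => rw [← Nat.sub_add_cancel h, Nat.cast_add, Fin.natCast_self, add_zero]

theorem add_natCast_pred_add_natCast (x : Fin k) {c : ℕ} (hc : 0 < c) :
    x + ((k - 1 : ℕ) : Fin k) + c = x + ((c - 1 : ℕ) : Fin k) := by
  have := NeZero.pos k
  rw [add_assoc, ← Nat.cast_add, ← add_natCast_sub_self (n := k - 1 + c) (by omega),
    show k - 1 + c - k = c - 1 by omega]

end Fin

namespace SimpleGraph

open Fin.NatCast

section Bull

variable {V W : Type*} {G : SimpleGraph V} {H : SimpleGraph W}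

theorem nonempty_embedding_of_adj_iff (hH : ∀ a b, (∀ c, H.Adj a c ↔ H.Adj b c) → a = b)
    (f : W → V) (hf : ∀ a b, G.Adj (f a) (f b) ↔ H.Adj a b) : Nonempty (H ↪g G) :=
  ⟨⟨⟨f, fun a b hab => hH a b fun c => by rw [← hf, ← hf, hab]⟩, hf _ _⟩⟩

instance : DecidableRel bull.Adj := fun a b =>
  inferInstanceAs (Decidable (a ≠ b ∧ (_ ∨ _)))

theorem contains_bull_of_adj {p₀ p₁ p₂ p₃ p₄ : V}
    (a01 : G.Adj p₀ p₁) (a02 : G.Adj p₀ p₂) (a12 : G.Adj p₁ p₂)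
    (a03 : G.Adj p₀ p₃) (a14 : G.Adj p₁ p₄)
    (n04 : ¬ G.Adj p₀ p₄) (n13 : ¬ G.Adj p₁ p₃) (n23 : ¬ G.Adj p₂ p₃)
    (n24 : ¬ G.Adj p₂ p₄) (n34 : ¬ G.Adj p₃ p₄) :
    Contains G bull := by
  refine nonempty_embedding_of_adj_iff (by decide) ![p₀, p₁, p₂, p₃, p₄] fun a b => ?_
  fin_cases a <;> fin_cases b <;> simp [G.adj_comm, *] <;> decide

end Bull

section CycleGraph

variable {k : ℕ}

theorem cycleGraph_adj_iff_val (hk : 2 ≤ k) {a b : Fin k} :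
    (cycleGraph k).Adj a b ↔ a.val + 1 = b ∨ b.val + 1 = a ∨
      (a.val = 0 ∧ b.val + 1 = k) ∨ (b.val = 0 ∧ a.val + 1 = k) := by
  rw [cycleGraph_adj']
  rcases lt_trichotomy a b with h | rfl | h
  · rw [Fin.coe_sub_iff_lt.2 h, Fin.coe_sub_iff_le.2 h.le]
    omega
  · rw [Fin.coe_sub_iff_le.2 le_rfl]
    omega
  · rw [Fin.coe_sub_iff_le.2 h.le, Fin.coe_sub_iff_lt.2 h]
    omega

theorem cycleGraph_adj_add_natCast [NeZero k] (hk : 2 ≤ k) (x : Fin k) {c d : ℕ} (hc : c < k)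
    (hd : d < k) :
    (cycleGraph k).Adj (x + c) (x + d) ↔
      c + 1 = d ∨ d + 1 = c ∨ (c = 0 ∧ d + 1 = k) ∨ (d = 0 ∧ c + 1 = k) := by
  rw [cycleGraph_adj', add_sub_add_left_eq_sub, add_sub_add_left_eq_sub, ← cycleGraph_adj',
    cycleGraph_adj_iff_val hk, Fin.val_cast_of_lt hc, Fin.val_cast_of_lt hd]

end CycleGraph

section Hole

-- Hole vertices are addressed as `e (x + s)` with an offset `s : ℕ`, `s < k`, so that adjacency
-- along the hole becomes linear arithmetic on offsets (`cycleGraph_adj_add_natCast`).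
variable {V : Type*} {G : SimpleGraph V} {k : ℕ} [NeZero k] (e : cycleGraph k ↪g G) {v : V}

theorem nonempty_cycleGraph_embedding_of_arc (hv : ∀ j, e j ≠ v) (y : Fin k) {g : ℕ}
    (hgk : g + 2 ≤ k) (hy : G.Adj v (e y)) (hyg : G.Adj v (e (y + g)))
    (hint : ∀ s, 0 < s → s < g → ¬ G.Adj v (e (y + s))) :
    Nonempty (cycleGraph (g + 2) ↪g G) := by
  let f : Fin (g + 2) → V := fun s => if s.val = g + 1 then v else e (y + (s.val : Fin k))
  have hf_arc (s : Fin (g + 2)) (hs : s.val ≤ g) : f s = e (y + (s.val : Fin k)) :=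
    if_neg (by omega)
  have hf_top (s : Fin (g + 2)) (hs : s.val = g + 1) : f s = v := if_pos hs
  have hv_arc (s : ℕ) (hs : s ≤ g) : G.Adj v (e (y + s)) ↔ s = 0 ∨ s = g := by
    refine ⟨fun h => by by_contra! hne; exact hint s (by omega) (by omega) h, ?_⟩
    rintro (rfl | rfl)
    · simpa using hy
    · exact hyg
  refine ⟨⟨⟨f, fun a b hab => ?_⟩, fun {a b} => ?_⟩⟩
  · by_cases ha : a.val = g + 1 <;> by_cases hb : b.val = g + 1
    · exact Fin.ext (ha.trans hb.symm)
    · rw [hf_top a ha, hf_arc b (by omega)] at hab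
      exact absurd hab.symm (hv _)
    · rw [hf_arc a (by omega), hf_top b hb] at hab
      exact absurd hab (hv _)
    · rw [hf_arc a (by omega), hf_arc b (by omega)] at hab
      exact Fin.ext ((Fin.add_natCast_inj y (by omega) (by omega)).1 (e.injective hab))
  · have := a.isLt
    have := b.isLt
    change G.Adj (f a) (f b) ↔ _
    rw [cycleGraph_adj_iff_val (by omega)]
    by_cases ha : a.val = g + 1 <;> by_cases hb : b.val = g + 1
    · rw [hf_top a ha, hf_top b hb]
      simp only [SimpleGraph.irrefl, false_iff]
      omega
    · rw [hf_top a ha, hf_arc b (by omega), hv_arc _ (by omega)]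
      omega
    · rw [hf_arc a (by omega), hf_top b hb, G.adj_comm, hv_arc _ (by omega)]
      omega
    · rw [hf_arc a (by omega), hf_arc b (by omega), e.map_adj_iff,
        cycleGraph_adj_add_natCast (by omega) y (by omega) (by omega)]
      omega

theorem exists_adj_add_natCast_ge_three (hk : 3 ≤ k)
    (hnot : ¬ ∃ i : Fin k, ∀ j, G.Adj v (e j) → j = i ∨ (cycleGraph k).Adj i j) (x : Fin k) :
    ∃ s, 3 ≤ s ∧ s < k ∧ G.Adj v (e (x + s)) := by
  push Not at hnot
  obtain ⟨j, hj, hjx, hjx'⟩ := hnot (x + (1 : ℕ))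
  obtain ⟨s, hs, rfl⟩ := Fin.exists_lt_eq_add_natCast x j
  refine ⟨s, ?_, hs, hj⟩
  rw [ne_eq, Fin.add_natCast_inj x hs (by omega)] at hjx
  rw [cycleGraph_adj_add_natCast (by omega) x (by omega) hs] at hjx'
  omega

theorem exists_odd_gap_adj (hodd : Odd k) {x : Fin k} (hx : G.Adj v (e x)) :
    ∃ y g, Odd g ∧ g ≤ k ∧ G.Adj v (e y) ∧ G.Adj v (e (y + g)) ∧
      ∀ s, 0 < s → s < g → ¬ G.Adj v (e (y + s)) := by
  obtain ⟨c, g, hg, hcg, hc, hgc, hint⟩ :=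
    Nat.exists_odd_gap (P := fun s => G.Adj v (e (x + s))) (by simpa using hx)
      (by simpa using hx) hodd
  have hshift (s : ℕ) : x + c + s = x + ((c + s : ℕ) : Fin k) := by rw [Nat.cast_add, add_assoc]
  refine ⟨x + c, g, hg, by omega, hc, by rwa [hshift], fun s hs hsg => ?_⟩
  rw [hshift]
  exact hint _ (by omega) (by omega)

theorem exists_two_consecutive_adj (he : IsShortestOddHole G e) (hv : ∀ j, e j ≠ v)
    (hfar : ∀ x : Fin k, ∃ s, 3 ≤ s ∧ s < k ∧ G.Adj v (e (x + s))) :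
    ∃ x : Fin k, G.Adj v (e (x + (1 : ℕ))) ∧ G.Adj v (e (x + (2 : ℕ))) := by
  obtain ⟨hk, hodd, hmin⟩ := he
  obtain ⟨_, -, -, hx⟩ := hfar 0
  obtain ⟨y, g, hg, hgk, hy, hyg, hint⟩ := exists_odd_gap_adj e hodd hx
  rw [Nat.odd_iff] at hg hodd
  obtain rfl | hg3 : g = 1 ∨ 3 ≤ g := by omega
  · refine ⟨y + ((k - 1 : ℕ) : Fin k), ?_, ?_⟩ <;>
      rw [Fin.add_natCast_pred_add_natCast y (by norm_num)]
    exacts [by simpa using hy, hyg]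
  by_cases hgk' : g + 4 ≤ k
  · have := hmin (g + 2) (by omega) (by rw [Nat.odd_iff]; omega)
      (nonempty_cycleGraph_embedding_of_arc e hv y (by omega) hy hyg hint)
    omega
  · obtain ⟨s, hs3, hsk, hs⟩ := hfar (y + g)
    rw [add_assoc, ← Nat.cast_add, ← Fin.add_natCast_sub_self (by omega)] at hs
    exact absurd hs (hint _ (by omega) (by omega))

theorem exists_three_consecutive_adj (hk : 5 ≤ k) (hbull : ¬ Contains G bull) {x : Fin k}
    (h1 : G.Adj v (e (x + (1 : ℕ)))) (h2 : G.Adj v (e (x + (2 : ℕ)))) :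
    ∃ x : Fin k, G.Adj v (e (x + (1 : ℕ))) ∧ G.Adj v (e (x + (2 : ℕ))) ∧
      G.Adj v (e (x + (3 : ℕ))) := by
  by_cases h3 : G.Adj v (e (x + (3 : ℕ)))
  · exact ⟨x, h1, h2, h3⟩
  by_cases h0 : G.Adj v (e (x + (0 : ℕ)))
  · refine ⟨x + ((k - 1 : ℕ) : Fin k), ?_, ?_, ?_⟩ <;>
      rw [Fin.add_natCast_pred_add_natCast x (by norm_num)] <;> assumption
  refine (hbull (contains_bull_of_adj (p₀ := e (x + (1 : ℕ))) (p₁ := e (x + (2 : ℕ))) (p₂ := v)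
    (p₃ := e (x + (0 : ℕ))) (p₄ := e (x + (3 : ℕ))) ?_ ?_ ?_ ?_ ?_ ?_ ?_ ?_ ?_ ?_)).elim <;>
  first
    | assumption
    | (rw [G.adj_comm]; assumption)
    | (rw [e.map_adj_iff, cycleGraph_adj_add_natCast (by omega) x (by omega) (by omega)]; omega)

open Fin.CommRing in
theorem exists_four_consecutive_adj (hk : 7 ≤ k) (hbull : ¬ Contains G bull)
    (hfar : ∀ x : Fin k, ∃ s, 3 ≤ s ∧ s < k ∧ G.Adj v (e (x + s))) {x : Fin k}
    (h1 : G.Adj v (e (x + (1 : ℕ)))) (h2 : G.Adj v (e (x + (2 : ℕ))))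
    (h3 : G.Adj v (e (x + (3 : ℕ)))) :
    ∃ i : Fin k, G.Adj v (e i) ∧ G.Adj v (e (i + 1)) ∧ G.Adj v (e (i + 2)) ∧
      G.Adj v (e (i + 3)) := by
  by_cases h0 : G.Adj v (e (x + (0 : ℕ)))
  · exact ⟨x, by simpa using h0, by simpa using h1, by simpa using h2, by simpa using h3⟩
  by_cases h4 : G.Adj v (e (x + (4 : ℕ)))
  · refine ⟨x + 1, by simpa using h1, ?_, ?_, ?_⟩ <;>
      [convert h2 using 2; convert h3 using 2; convert h4 using 2] <;> (push_cast; ring)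
  obtain ⟨s, hs3, hsk, hs⟩ := hfar (x + (1 : ℕ))
  rw [add_assoc, ← Nat.cast_add] at hs
  -- `x + (1 + s)` is a neighbour of `v` with `5 ≤ 1 + s < k`; when `1 + s = k - 1` it is adjacent
  -- to `x`, so the bull is built on the other side of the path.
  obtain hsk' | hsk' | hsk' : 1 + s + 1 < k ∨ 1 + s + 1 = k ∨ 1 + s = k := by omega
  · refine (hbull (contains_bull_of_adj (p₀ := e (x + (1 : ℕ))) (p₁ := v)
      (p₂ := e (x + (2 : ℕ))) (p₃ := e (x + (0 : ℕ))) (p₄ := e (x + (1 + s : ℕ)))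
      ?_ ?_ ?_ ?_ ?_ ?_ ?_ ?_ ?_ ?_)).elim <;>
    first
      | assumption
      | (rw [G.adj_comm]; assumption)
      | (rw [e.map_adj_iff, cycleGraph_adj_add_natCast (by omega) x (by omega) (by omega)]; omega)
  · refine (hbull (contains_bull_of_adj (p₀ := e (x + (3 : ℕ))) (p₁ := v)
      (p₂ := e (x + (2 : ℕ))) (p₃ := e (x + (4 : ℕ))) (p₄ := e (x + (1 + s : ℕ)))
      ?_ ?_ ?_ ?_ ?_ ?_ ?_ ?_ ?_ ?_)).elim <;>
    first
      | assumption
      | (rw [G.adj_comm]; assumption)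
      | (rw [e.map_adj_iff, cycleGraph_adj_add_natCast (by omega) x (by omega) (by omega)]; omega)
  · rw [hsk', Fin.natCast_self, ← Nat.cast_zero] at hs
    exact absurd hs h0

end Hole

end SimpleGraph

theorem stmt_2 {V : Type*} (G : SimpleGraph V)
    (hbull : ¬ Contains G bull)
    (hC5 : ¬ Contains G (SimpleGraph.cycleGraph 5))
    (k : ℕ) [NeZero k] (e : SimpleGraph.cycleGraph k ↪g G)
    (he : IsShortestOddHole G e)
    (v : V) (hv : ∀ j, e j ≠ v)
    (hnot : ¬ ∃ i : Fin k, ∀ j, G.Adj v (e j) → j = i ∨ (SimpleGraph.cycleGraph k).Adj i j) :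
    ∃ i : Fin k, G.Adj v (e i) ∧ G.Adj v (e (i + 1)) ∧
      G.Adj v (e (i + 2)) ∧ G.Adj v (e (i + 3)) := by
  have hk : 7 ≤ k := by
    obtain ⟨h5, hodd, -⟩ := he
    have : k ≠ 5 := by rintro rfl; exact hC5 ⟨e⟩
    rw [Nat.odd_iff] at hodd
    omega
  have hfar := exists_adj_add_natCast_ge_three e (by omega) hnot
  obtain ⟨x, h1, h2⟩ := exists_two_consecutive_adj e he hv hfar
  obtain ⟨x, h1, h2, h3⟩ := exists_three_consecutive_adj e (by omega) hbull h1 h2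
  exact exists_four_consecutive_adj e hk hbull hfar h1 h2 h3
end

section
/- Let G be a graph and X a homogeneous set of G. Then G contains an odd hole if and only if at least one of G1(X) (obtained from G by deleting all but one vertex of X) or G2(X) = G[X] contains an odd hole. -/
open SimpleGraph

/-!
Pull the homogeneous set `X` back along an induced cycle `C` of length at least five: the
preimage is again homogeneous in `C`, and a cycle of length at least five has no homogeneous set
with more than one vertex other than the whole cycle. So either `C` lies inside `X`, or `C`
meets `X` in at most one vertex, which can be replaced by `x` since all vertices of `X` have
the same neighbours outside `X`.
-/

open Fin.CommRing

/-- A homogeneous set without the size bounds; also called a module. -/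
def SimpleGraph.IsModule {V : Type*} (G : SimpleGraph V) (S : Set V) : Prop :=
  ∀ v ∉ S, (∀ x ∈ S, G.Adj v x) ∨ (∀ x ∈ S, ¬ G.Adj v x)

theorem IsHomogeneousSet.isModule {V : Type*} [Fintype V] {G : SimpleGraph V} {X : Finset V}
    (hX : IsHomogeneousSet G X) : G.IsModule X :=
  hX.2.2

theorem Fin.exists_mem_add_one_notMem {n : ℕ} [NeZero n] {s : Set (Fin n)} {a b : Fin n}
    (ha : a ∈ s) (hb : b ∉ s) : ∃ i ∈ s, i + 1 ∉ s := by
  by_contra! h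
  have hadd : ∀ k : ℕ, a + k ∈ s := by
    intro k
    induction k with
    | zero => simpa using ha
    | succ k ih => simpa [add_assoc] using h _ ih
  exact hb (by simpa using hadd (b - a).val)

theorem SimpleGraph.cycleGraph_not_adj_add_natCast {n k : ℕ} (j : Fin (n + 2)) (hk : 2 ≤ k)
    (hkn : k ≤ n) : ¬ (cycleGraph (n + 2)).Adj (j + k) j := by
  obtain ⟨l, rfl⟩ : ∃ l, k = l + 1 := ⟨k - 1, by omega⟩
  rw [cycleGraph_adj, add_sub_cancel_left, sub_add_cancel_left]
  rintro (h | h)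
  · refine Nat.not_dvd_of_pos_of_lt (n := l) (m := n + 2) (by omega) (by omega)
      (Fin.natCast_eq_zero.mp ?_)
    push_cast at h ⊢
    linear_combination h
  · refine Nat.not_dvd_of_pos_of_lt (n := l + 2) (m := n + 2) (by omega) (by omega)
      (Fin.natCast_eq_zero.mp ?_)
    push_cast at h ⊢
    linear_combination -h

namespace SimpleGraph.IsModule

variable {V W : Type*} {G : SimpleGraph V} {H : SimpleGraph W} {S : Set V}

theorem adj_iff (hS : G.IsModule S) {v x y : V} (hv : v ∉ S) (hx : x ∈ S) (hy : y ∈ S) :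
    G.Adj x v ↔ G.Adj y v := by
  rw [G.adj_comm x, G.adj_comm y]
  rcases hS v hv with h | h
  · exact iff_of_true (h x hx) (h y hy)
  · exact iff_of_false (h x hx) (h y hy)

theorem forall_adj_of_adj (hS : G.IsModule S) {v x : V} (hv : v ∉ S) (hx : x ∈ S)
    (hvx : G.Adj v x) : ∀ y ∈ S, G.Adj v y :=
  (hS v hv).resolve_right fun h => h x hx hvx

theorem preimage (hS : G.IsModule S) (f : H ↪g G) : H.IsModule (f ⁻¹' S) := by
  intro v hv
  rcases hS (f v) hv with h | h
  · exact Or.inl fun w hw => f.map_adj_iff.mp (h _ hw)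
  · exact Or.inr fun w hw hvw => h _ hw (f.map_adj_iff.mpr hvw)

theorem subsingleton_or_eq_univ_of_cycleGraph {n : ℕ} (hn : 5 ≤ n) {S : Set (Fin n)}
    (hS : (cycleGraph n).IsModule S) : S.Subsingleton ∨ S = Set.univ := by
  obtain ⟨m, rfl⟩ : ∃ m, n = m + 5 := ⟨n - 5, by omega⟩
  by_contra! h
  obtain ⟨⟨a, ha, c, hc, hac⟩, hne⟩ := h
  obtain ⟨b, hb⟩ := (Set.ne_univ_iff_exists_notMem S).mp hne
  obtain ⟨j, hj, hj1⟩ := Fin.exists_mem_add_one_notMem ha hb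
  have adj_succ : ∀ i : Fin (m + 5), (cycleGraph (m + 5)).Adj (i + 1) i := fun i => by
    simp [cycleGraph_adj]
  have not_adj_two : ∀ i : Fin (m + 5), ¬ (cycleGraph (m + 5)).Adj (i + 2) i := fun i => by
    simpa using cycleGraph_not_adj_add_natCast (n := m + 3) (k := 2) i le_rfl (by omega)
  have not_adj_three : ∀ i : Fin (m + 5), ¬ (cycleGraph (m + 5)).Adj (i + 3) i := fun i => by
    simpa using cycleGraph_not_adj_add_natCast (n := m + 3) (k := 3) i (by omega) (by omega)
  -- `j + 1` sees `j`, hence all of `S`; so `S` lies in the neighbourhood `{j, j + 2}` of `j + 1`.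
  have hj1S := hS.forall_adj_of_adj hj1 hj (adj_succ j)
  have hsub : ∀ y ∈ S, y = j ∨ y = j + 2 := fun y hy => by
    rcases hj1S y hy with h | h
    · left; linear_combination -h
    · right; linear_combination h
  have hj2 : j + 2 ∈ S := by
    rcases hsub a ha with rfl | rfl <;> rcases hsub c hc with rfl | rfl <;> trivial
  have hj3 : j + 3 ∉ S := fun h3 =>
    not_adj_two (j + 1) (by convert (hj1S _ h3).symm using 1; ring)
  have hj3S := hS.forall_adj_of_adj hj3 hj2 (by convert adj_succ (j + 2) using 1; ring)
  exact not_adj_three j (hj3S j hj)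

theorem exists_embedding_update (hS : G.IsModule S) (f : H ↪g G) {a : W}
    (ha : ∀ b, f b ∈ S → b = a) (hfa : f a ∈ S) {x : V} (hx : x ∈ S) :
    ∃ g : H ↪g G, g a = x ∧ ∀ b ≠ a, g b = f b := by
  classical
  have hout : ∀ b ≠ a, f b ∉ S := fun b hb hbS => hb (ha b hbS)
  have hadj : ∀ b ≠ a, (G.Adj x (f b) ↔ H.Adj a b) := fun b hb =>
    (hS.adj_iff (hout b hb) hx hfa).trans f.map_adj_iff
  refine ⟨⟨⟨Function.update f a x, ?_⟩, ?_⟩, Function.update_self a x f,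
    fun b hb => Function.update_of_ne hb _ _⟩
  · intro b c hbc
    rcases eq_or_ne a b with rfl | hb <;> rcases eq_or_ne a c with rfl | hc
    · rfl
    · simp only [Function.update_self, Function.update_of_ne hc.symm] at hbc
      exact absurd (hbc ▸ hx) (hout c hc.symm)
    · simp only [Function.update_self, Function.update_of_ne hb.symm] at hbc
      exact absurd (hbc ▸ hx) (hout b hb.symm)
    · simpa [Function.update_of_ne hb.symm, Function.update_of_ne hc.symm] using hbc
  · intro b c
    change G.Adj (Function.update f a x b) (Function.update f a x c) ↔ H.Adj b c
    rcases eq_or_ne a b with rfl | hb <;> rcases eq_or_ne a c with rfl | hc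
    · simp
    · simpa [Function.update_of_ne hc.symm] using hadj c hc.symm
    · simpa [Function.update_of_ne hb.symm, G.adj_comm _ x, H.adj_comm _ a] using hadj b hb.symm
    · simp [Function.update_of_ne hb.symm, Function.update_of_ne hc.symm]

theorem exists_embedding_range_subset (hS : G.IsModule S) (f : H ↪g G)
    (hf : (f ⁻¹' S).Subsingleton) {x : V} (hx : x ∈ S) :
    ∃ g : H ↪g G, Set.range g ⊆ Sᶜ ∪ {x} := by
  by_cases h : ∃ a, f a ∈ S
  · obtain ⟨a, hfa⟩ := h
    obtain ⟨g, hga, hg⟩ := hS.exists_embedding_update f (fun b hb => hf hb hfa) hfa hx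
    refine ⟨g, Set.range_subset_iff.mpr fun b => ?_⟩
    rcases eq_or_ne b a with rfl | hb
    · exact Or.inr hga
    · exact Or.inl (hg b hb ▸ fun hbS => hb (hf hbS hfa))
  · push Not at h
    exact ⟨f, Set.range_subset_iff.mpr fun b => Or.inl (h b)⟩

end SimpleGraph.IsModule

theorem SimpleGraph.Embedding.nonempty_induce_of_range_subset {V W : Type*} {G : SimpleGraph V}
    {H : SimpleGraph W} (f : H ↪g G) {s : Set V} (h : Set.range f ⊆ s) :
    Nonempty (H ↪g G.induce s) :=
  ⟨(induceHomOfLE G h).comp f.isoInduceRange.toEmbedding⟩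

theorem HasOddHole.of_embedding {V W : Type*} {H : SimpleGraph W} {G : SimpleGraph V}
    (φ : H ↪g G) : HasOddHole H → HasOddHole G
  | ⟨n, hn, hodd, ⟨e⟩⟩ => ⟨n, hn, hodd, ⟨φ.comp e⟩⟩

theorem stmt_10 {V : Type*} [Fintype V] (G : SimpleGraph V) (X : Finset V)
    (hX : IsHomogeneousSet G X) (x : V) (hx : x ∈ X) :
    HasOddHole G ↔
      (HasOddHole (G.induce ((↑X : Set V)ᶜ ∪ {x})) ∨
        HasOddHole (G.induce (↑X : Set V))) := by
  refine ⟨fun ⟨n, hn, hodd, ⟨e⟩⟩ => ?_, ?_⟩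
  · rcases (hX.isModule.preimage e).subsingleton_or_eq_univ_of_cycleGraph hn with h | h
    · obtain ⟨g, hg⟩ := hX.isModule.exists_embedding_range_subset e h hx
      exact Or.inl ⟨n, hn, hodd, g.nonempty_induce_of_range_subset hg⟩
    · exact Or.inr
        ⟨n, hn, hodd, e.nonempty_induce_of_range_subset (Set.preimage_eq_univ_iff.mp h)⟩
  · rintro (h | h) <;> exact h.of_embedding (Embedding.induce _)
end
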